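/- For every coisotropic A-module E there exists a coisotropic index set M with ι_M injective and a regular epimorphism A^(M) → E; i.e. the category of coisotropic A-modules has enough SetTripleInj-free objects. -/

import Mathlib

/-! Cover `E` by the free module on the generators `E.T ⊕ E.W` (`T`-side) and `E.W` (`W`-side),
with `ι = Sum.inr` and null generators `E.N`. The `E.W`-generators already make the `W`-component
and the null part surjective; the extra summand `E.T` makes the `T`-component surjective while
keeping `ι` injective, which `E.str` itself need not be. -/

/-! Coisotropic index sets and their morphisms. -/

universe u

structure CoisoSet : Type (u + 1) where
  T : Type u
  W : Type u
  N : Set W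
  str : W → T

structure CoisoSetHom (M P : CoisoSet.{u}) : Type u where
  T : M.T → P.T
  W : M.W → P.W
  comm : ∀ x : M.W, T (M.str x) = P.str (W x)
  null : ∀ x ∈ M.N, W x ∈ P.N

def CoisoSetHom.id (M : CoisoSet) : CoisoSetHom M M :=
  ⟨fun x => x, fun x => x, fun _ => rfl, fun _ h => h⟩

def CoisoSetHom.comp {M P Q : CoisoSet} (g : CoisoSetHom P Q)
    (f : CoisoSetHom M P) : CoisoSetHom M Q :=
  ⟨g.T ∘ f.T, g.W ∘ f.W,
    fun x => by simp only [Function.comp_apply, f.comm, g.comm],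
    fun x hx => g.null _ (f.null _ hx)⟩

/-! Coisotropic algebras and coisotropic (right) modules over them.
Following the paper, a coisotropic algebra is a triple `(A_T, A_W, A_0)`
of unital `k`-algebras with a two-sided ideal `A_0 ⊆ A_W` and a unital
algebra morphism `ι : A_W → A_T`.  Modules are formalized with Lean's
(left) module conventions. -/

structure CoisoAlg (k : Type u) [CommRing k] : Type (u + 1) where
  T : Type u
  W : Type u
  [ringT : Ring T]
  [ringW : Ring W]
  [algT : Algebra k T]
  [algW : Algebra k W]
  /-- `N` is a left ideal ... -/
  N : Ideal W
  /-- ... which is also a right ideal, hence two-sided. -/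
  N_mul_right : ∀ x ∈ N, ∀ a : W, x * a ∈ N
  str : W →ₐ[k] T

attribute [instance] CoisoAlg.ringT CoisoAlg.ringW CoisoAlg.algT CoisoAlg.algW

variable {k : Type u} [CommRing k]

/-- A coisotropic module over the coisotropic algebra `A`. -/
structure CoisoRMod (A : CoisoAlg k) : Type (u + 1) where
  T : Type u
  W : Type u
  [addT : AddCommGroup T]
  [addW : AddCommGroup W]
  [modT : Module A.T T]
  [modW : Module A.W W]
  N : Submodule A.W W
  null_smul : ∀ a ∈ A.N, ∀ x : W, a • x ∈ N
  str : W → T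
  str_add : ∀ x y : W, str (x + y) = str x + str y
  str_smul : ∀ (a : A.W) (x : W), str (a • x) = A.str a • str x

attribute [instance] CoisoRMod.addT CoisoRMod.addW CoisoRMod.modT CoisoRMod.modW

variable {A : CoisoAlg k}

theorem CoisoRMod.str_zero (E : CoisoRMod A) : E.str 0 = 0 := by
  have h := E.str_add 0 0
  rw [add_zero] at h
  exact (left_eq_add.mp h)

/-- Morphisms of coisotropic modules over `A`. -/
structure CoisoRModHom (E F : CoisoRMod A) : Type u where
  T : E.T →ₗ[A.T] F.T
  W : E.W →ₗ[A.W] F.W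
  comm : ∀ x : E.W, T (E.str x) = F.str (W x)
  null : ∀ x ∈ E.N, W x ∈ F.N

theorem CoisoRModHom.ext' {E F : CoisoRMod A} {f g : CoisoRModHom E F}
    (h1 : f.T = g.T) (h2 : f.W = g.W) : f = g := by
  cases f; cases g; cases h1; cases h2; rfl

def CoisoRModHom.id (E : CoisoRMod A) : CoisoRModHom E E :=
  ⟨LinearMap.id, LinearMap.id, fun _ => rfl, fun _ h => h⟩

def CoisoRModHom.comp {E F G : CoisoRMod A} (g : CoisoRModHom F G)
    (f : CoisoRModHom E F) : CoisoRModHom E G :=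
  ⟨g.T ∘ₗ f.T, g.W ∘ₗ f.W,
    fun x => by simp only [LinearMap.comp_apply, f.comm, g.comm],
    fun x hx => g.null _ (f.null _ hx)⟩

/-- Regular epimorphisms of coisotropic modules: both components surjective
and the null submodule mapped onto the null submodule. -/
def IsRegEpiMod {E F : CoisoRMod A} (Φ : CoisoRModHom E F) : Prop :=
  Function.Surjective Φ.T ∧ Function.Surjective Φ.W ∧
    ∀ y ∈ F.N, ∃ x ∈ E.N, Φ.W x = y

/-- A coisotropic module is regular projective if morphisms out of it lift
along regular epimorphisms. -/
def RegProjective (P : CoisoRMod A) : Prop :=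
  ∀ (E F : CoisoRMod A) (Φ : CoisoRModHom E F) (Ψ : CoisoRModHom P F),
    IsRegEpiMod Φ → ∃ χ : CoisoRModHom P E, Φ.comp χ = Ψ

/-- Isomorphisms of coisotropic modules. -/
def IsIsoMod {E F : CoisoRMod A} (Φ : CoisoRModHom E F) : Prop :=
  ∃ Ψ : CoisoRModHom F E,
    Φ.comp Ψ = CoisoRModHom.id F ∧ Ψ.comp Φ = CoisoRModHom.id E

/-- The free coisotropic `A`-module on a coisotropic index set `M`. -/
noncomputable def freeMod (A : CoisoAlg k) (M : CoisoSet.{u}) : CoisoRMod A where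
  T := M.T →₀ A.T
  W := M.W →₀ A.W
  N :=
    { carrier := {f : M.W →₀ A.W | ∀ m, m ∉ M.N → f m ∈ A.N}
      add_mem' := fun hf hg m hm => by
        simpa [Finsupp.add_apply] using A.N.add_mem (hf m hm) (hg m hm)
      zero_mem' := fun m hm => by simp
      smul_mem' := fun a f hf m hm => by
        simpa [Finsupp.smul_apply] using A.N.smul_mem a (hf m hm) }
  null_smul := fun a ha f m hm => by
    simpa [Finsupp.smul_apply, smul_eq_mul] using A.N_mul_right a ha (f m)
  str := fun f => f.sum fun m a => Finsupp.single (M.str m) (A.str a)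
  str_add := fun f g =>
    Finsupp.sum_add_index' (fun m => by simp) (fun m a b => by
      simp [map_add, Finsupp.single_add])
  str_smul := fun a f => by
    classical
    show (a • f).sum (fun m b => Finsupp.single (M.str m) (A.str b)) =
      A.str a • f.sum (fun m b => Finsupp.single (M.str m) (A.str b))
    rw [Finsupp.sum_smul_index (fun m => by simp), Finsupp.smul_sum]
    refine Finsupp.sum_congr ?_
    intro m _
    rw [map_mul]
    exact (Finsupp.smul_single' _ _ _).symm

/-- `A` as a coisotropic module over itself. -/
def selfMod (A : CoisoAlg k) : CoisoRMod A where
  T := A.T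
  W := A.W
  N := A.N
  null_smul := fun a ha x => by
    simpa [smul_eq_mul] using A.N_mul_right a ha x
  str := A.str
  str_add := fun x y => map_add _ x y
  str_smul := fun a x => by simp [smul_eq_mul, map_mul]

/-- The coisotropic index set underlying a coisotropic module. -/
def toCoisoSet (E : CoisoRMod A) : CoisoSet.{u} :=
  ⟨E.T, E.W, (E.N : Set E.W), E.str⟩

namespace freeMod

variable {M : CoisoSet.{u}}

theorem single_mem_N {m : M.W} (hm : m ∈ M.N) (a : A.W) :
    (Finsupp.single m a : M.W →₀ A.W) ∈ (freeMod A M).N := by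
  intro n hn
  rw [Finsupp.single_eq_of_ne' (ne_of_mem_of_not_mem hm hn)]
  exact A.N.zero_mem

/- `(freeMod A M).str f` spelled out, so that rewriting happens at `Finsupp`'s own instances
rather than at the (only definitionally equal) ones of `freeMod A M`. -/
theorem linearCombination_str {E : CoisoRMod A} {vT : M.T → E.T} {vW : M.W → E.W}
    (hcomm : ∀ m, vT (M.str m) = E.str (vW m)) (f : M.W →₀ A.W) :
    Finsupp.linearCombination A.T vT (f.sum fun m a => Finsupp.single (M.str m) (A.str a)) =
      E.str (Finsupp.linearCombination A.W vW f) := by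
  induction f using Finsupp.induction_linear with
  | zero => simp only [Finsupp.sum_zero_index, map_zero, E.str_zero]
  | add f g hf hg =>
    rw [Finsupp.sum_add_index' (by simp) (by simp [Finsupp.single_add]), map_add, map_add,
      E.str_add, hf, hg]
  | single m a =>
    rw [Finsupp.sum_single_index (by simp), Finsupp.linearCombination_single,
      Finsupp.linearCombination_single, E.str_smul, hcomm]

noncomputable def lift (E : CoisoRMod A) (vT : M.T → E.T) (vW : M.W → E.W)
    (hcomm : ∀ m, vT (M.str m) = E.str (vW m)) (hnull : ∀ m ∈ M.N, vW m ∈ E.N) :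
    CoisoRModHom (freeMod A M) E where
  T := Finsupp.linearCombination A.T vT
  W := Finsupp.linearCombination A.W vW
  comm := linearCombination_str hcomm
  null f hf := by
    refine Submodule.finsuppSum_mem _ _ _ _ fun m _ => ?_
    by_cases hm : m ∈ M.N
    · exact E.N.smul_mem _ (hnull m hm)
    · exact E.null_smul _ (hf m hm) _

end freeMod

def coverIndexSet (E : CoisoRMod A) : CoisoSet.{u} :=
  ⟨E.T ⊕ E.W, E.W, (E.N : Set E.W), Sum.inr⟩

theorem coverIndexSet_str_injective (E : CoisoRMod A) :
    Function.Injective (coverIndexSet E).str :=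
  Sum.inr_injective

noncomputable def cover (E : CoisoRMod A) : CoisoRModHom (freeMod A (coverIndexSet E)) E :=
  freeMod.lift E (Sum.elim id E.str) id (fun _ => rfl) (fun _ hm => hm)

theorem cover_isRegEpiMod (E : CoisoRMod A) : IsRegEpiMod (cover E) := by
  refine ⟨Finsupp.linearCombination_surjective _ fun t => ⟨Sum.inl t, rfl⟩,
    Finsupp.linearCombination_id_surjective _ _, fun y hy => ?_⟩
  refine ⟨Finsupp.single y 1, freeMod.single_mem_N hy 1, ?_⟩
  exact (Finsupp.linearCombination_single _ _ _).trans (one_smul _ _)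

/-- for every coisotropic `A`-module `E` there is a
coisotropic index set `M` with `ι_M` injective and a regular epimorphism
`A^(M) → E`: the category of coisotropic `A`-modules has enough
`SetTripleInj`-free objects. -/
theorem enough_free (A : CoisoAlg k) (E : CoisoRMod A) :
    ∃ M : CoisoSet.{u}, Function.Injective M.str ∧
      ∃ Φ : CoisoRModHom (freeMod A M) E, IsRegEpiMod Φ :=
  ⟨coverIndexSet E, coverIndexSet_str_injective E, cover E, cover_isRegEpiMod E⟩
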